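/- The assignments U ↦ Q(U) (essential image) and X ↦ Q⁻¹(X) (preimage) are mutually inverse, inclusion-preserving bijections between the collection of extension-closed additive full subcategories of T containing D and the collection of extension-closed additive full subcategories of T/D. -/

import Mathlib

open CategoryTheory Limits Pretriangulated

universe v₁ v₂ u₁ u₂

def IsAdditiveSubcategory {T : Type u₁} [Category.{v₁} T] [Preadditive T] [HasZeroObject T]
    [HasBinaryBiproducts T] (U : Set T) : Prop :=
  (∀ X : T, IsZero X → X ∈ U) ∧
  (∀ X Y : T, X ∈ U → Nonempty (X ≅ Y) → Y ∈ U) ∧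
  (∀ X Y : T, X ∈ U → Y ∈ U → (X ⊞ Y) ∈ U) ∧
  (∀ X Y : T, (X ⊞ Y) ∈ U → X ∈ U ∧ Y ∈ U)

def IsExtensionClosed (T : Type u₁) [Category.{v₁} T] [Preadditive T] [HasZeroObject T]
    [HasShift T ℤ] [∀ n : ℤ, (shiftFunctor T n).Additive] [Pretriangulated T]
    (U : Set T) : Prop :=
  ∀ Tr : Triangle T, Tr ∈ (distTriang T) → Tr.obj₁ ∈ U → Tr.obj₃ ∈ U → Tr.obj₂ ∈ U

def essImageSet {T : Type u₁} [Category.{v₁} T] {T' : Type u₂} [Category.{v₂} T']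
    (Q : T ⥤ T') (U : Set T) : Set T' :=
  {z : T' | ∃ u ∈ U, Nonempty (z ≅ Q.obj u)}

def preimageSet {T : Type u₁} [Category.{v₁} T] {T' : Type u₂} [Category.{v₂} T']
    (Q : T ⥤ T') (X : Set T') : Set T :=
  {t : T | ∃ x ∈ X, Nonempty (Q.obj t ≅ x)}

/-!
Everything rests on one saturation property: a morphism of `T` is inverted by `Q` exactly when
its cone lies in `D`. The nontrivial half reduces to "`Q X = 0` implies `X ∈ D`", and this is
where thickness enters, since such an `X` turns out to be a retract of an object of `D`.
Without the octahedral axiom `D.trW` need not be closed under composition, so we pass to its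
multiplicative closure, which has the same localization and a calculus of right fractions.

An extension-closed `U ⊇ D` is saturated in the same sense: if the cone of `s : X ⟶ Y` lies in
`D`, then `X ∈ U ↔ Y ∈ U`. Hence `Q⁻¹(Q U) = U`. Writing the third morphism of a distinguished
triangle of `T/D` as a right fraction lifts the triangle to `T` with its ends still in `U`,
which makes `Q U` extension-closed.
-/

open ZeroObject

namespace CategoryTheory

namespace MorphismProperty

variable {C : Type*} [Category C] (W : MorphismProperty C)

lemma hasRightCalculusOfFractions_multiplicativeClosure
    (ore : ∀ ⦃X Y Y' : C⦄ (s : Y ⟶ Y') (f : X ⟶ Y'), W s →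
      ∃ (P : C) (s' : P ⟶ X) (f' : P ⟶ Y) (_ : W.multiplicativeClosure s'), s' ≫ f = f' ≫ s)
    (cancel : ∀ ⦃Y Z Z' : C⦄ (f₁ f₂ : Y ⟶ Z) (s : Z ⟶ Z'), W s → f₁ ≫ s = f₂ ≫ s →
      ∃ (Y' : C) (t : Y' ⟶ Y) (_ : W.multiplicativeClosure t), t ≫ f₁ = t ≫ f₂) :
    W.multiplicativeClosure.HasRightCalculusOfFractions where
  exists_rightFraction X Y φ := by
    suffices ∀ ⦃Y Y' : C⦄ (s : Y ⟶ Y'), W.multiplicativeClosure s → ∀ ⦃X : C⦄ (f : X ⟶ Y'),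
        ∃ (P : C) (s' : P ⟶ X) (f' : P ⟶ Y) (_ : W.multiplicativeClosure s'),
          s' ≫ f = f' ≫ s by
      obtain ⟨P, s', f', hs', fac⟩ := this φ.s φ.hs φ.f
      exact ⟨RightFraction.mk s' hs' f', fac⟩
    intro Y Y' s hs
    induction hs with
    | of s hs => exact fun X f => ore s f hs
    | id Y => exact fun X f => ⟨X, 𝟙 X, f, .id X, by simp⟩
    | comp_of s₁ s₂ _ hs₂ ih =>
      intro X f
      obtain ⟨P₂, s₂', f₂', hs₂', fac₂⟩ := ore s₂ f hs₂
      obtain ⟨P₁, s₁', f₁', hs₁', fac₁⟩ := ih f₂'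
      exact ⟨P₁, s₁' ≫ s₂', f₁', comp_mem _ _ _ hs₁' hs₂', by
        rw [Category.assoc, fac₂, reassoc_of% fac₁]⟩
  ext Y Z Z' f₁ f₂ s hs fac := by
    induction hs generalizing Y with
    | of s hs => exact cancel f₁ f₂ s hs fac
    | id Z => exact ⟨Y, 𝟙 Y, .id Y, by simpa using fac⟩
    | comp_of s₁ s₂ _ hs₂ ih =>
      obtain ⟨Y₂, t₂, ht₂, fac₂⟩ := cancel (f₁ ≫ s₁) (f₂ ≫ s₁) s₂ hs₂ (by simpa using fac)
      obtain ⟨Y₁, t₁, ht₁, fac₁⟩ := ih _ (t₂ ≫ f₁) (t₂ ≫ f₂) (by simpa using fac₂)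
      exact ⟨Y₁, t₁ ≫ t₂, comp_mem _ _ _ ht₁ ht₂, by simpa using fac₁⟩

end MorphismProperty

lemma Functor.IsLocalization.multiplicativeClosure {C D : Type*} [Category C] [Category D]
    (L : C ⥤ D) (W : MorphismProperty C) [L.IsLocalization W] :
    L.IsLocalization W.multiplicativeClosure := by
  refine of_equivalence_source L W L W.multiplicativeClosure (Equivalence.refl)
    (fun _ _ f hf => MorphismProperty.le_isoClosure _ _ (.of f hf)) ?_ L.leftUnitor
  rw [MorphismProperty.IsInvertedBy.iff_le_inverseImage_isomorphisms,
    MorphismProperty.multiplicativeClosure_le_iff,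
    ← MorphismProperty.IsInvertedBy.iff_le_inverseImage_isomorphisms]
  exact Localization.inverts L W

end CategoryTheory

namespace CategoryTheory.ObjectProperty

variable {C : Type*} [Category C] [Preadditive C] [HasZeroObject C] [HasShift C ℤ]
  [∀ n : ℤ, (shiftFunctor C n).Additive] [Pretriangulated C] (P : ObjectProperty C)

lemma trW_rightOre {X Y Y' : C} (s : Y ⟶ Y') (f : X ⟶ Y') (hs : P.trW s) :
    ∃ (X' : C) (s' : X' ⟶ X) (f' : X' ⟶ Y), P.trW s' ∧ s' ≫ f = f' ≫ s := by
  obtain ⟨Z, g, h, H, hZ⟩ := hs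
  obtain ⟨X', s', h', H'⟩ := distinguished_cocone_triangle₁ (f ≫ g)
  obtain ⟨f', fac, -⟩ := complete_distinguished_triangle_morphism₁ _ _ H' H f (𝟙 Z)
    (Category.comp_id _)
  exact ⟨X', s', f', trW.mk P H' hZ, fac⟩

lemma trW_rightCancel [P.IsStableUnderShift ℤ] {Y Z Z' : C} (f₁ f₂ : Y ⟶ Z) (s : Z ⟶ Z')
    (hs : P.trW s) (fac : f₁ ≫ s = f₂ ≫ s) :
    ∃ (Y' : C) (t : Y' ⟶ Y), P.trW t ∧ t ≫ f₁ = t ≫ f₂ := by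
  obtain ⟨X, ι, h, H, hX⟩ := (P.trW_iff' s).1 hs
  have hf : (f₁ - f₂) ≫ s = 0 := by rw [Preadditive.sub_comp, fac, sub_self]
  obtain ⟨q, hq⟩ : ∃ q : Y ⟶ X, f₁ - f₂ = q ≫ ι := Triangle.coyoneda_exact₂ _ H _ hf
  obtain ⟨Y', t, h', H'⟩ := distinguished_cocone_triangle₁ q
  have htq : t ≫ q = 0 := comp_distTriang_mor_zero₁₂ _ H'
  refine ⟨Y', t, trW.mk P H' hX, ?_⟩
  rw [← sub_eq_zero, ← Preadditive.comp_sub, hq, reassoc_of% htq, zero_comp]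

instance [P.IsStableUnderShift ℤ] : P.trW.multiplicativeClosure.HasRightCalculusOfFractions :=
  P.trW.hasRightCalculusOfFractions_multiplicativeClosure
    (fun _ _ _ s f hs => by
      obtain ⟨X', s', f', hs', fac⟩ := P.trW_rightOre s f hs
      exact ⟨X', s', f', .of _ hs', fac⟩)
    (fun _ _ _ f₁ f₂ s hs fac => by
      obtain ⟨Y', t, ht, fac'⟩ := P.trW_rightCancel f₁ f₂ s hs fac
      exact ⟨Y', t, .of _ ht, fac'⟩)

lemma isStableUnderRetracts_of_biprod [HasBinaryBiproducts C] [P.IsClosedUnderIsomorphisms]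
    (h : ∀ X Y : C, P (X ⊞ Y) → P X ∧ P Y) : P.IsStableUnderRetracts where
  of_retract {X Y} r hY := by
    obtain ⟨Z, p, δ, H⟩ := distinguished_cocone_triangle r.i
    have hδ : δ = 0 := by
      have : δ ≫ (r.i ≫ r.r)⟦(1 : ℤ)⟧' = 0 := by
        have hδi : δ ≫ r.i⟦(1 : ℤ)⟧' = 0 := comp_distTriang_mor_zero₃₁ _ H
        rw [Functor.map_comp, reassoc_of% hδi, zero_comp]
      simpa using this
    obtain ⟨e, -⟩ := exists_iso_binaryBiproduct_of_distTriang _ H hδ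
    exact (h X Z (P.prop_of_iso e hY)).1

def FactorsThrough {X Y : C} (f : X ⟶ Y) : Prop :=
  ∃ (Z : C) (a : X ⟶ Z) (b : Z ⟶ Y), P Z ∧ a ≫ b = f

variable {P} [P.IsTriangulated] [P.IsClosedUnderIsomorphisms]

lemma FactorsThrough.of_trW_comp [HasBinaryBiproducts C] {X Y Z : C} {s : X ⟶ Y}
    (hs : P.trW s) {f : Y ⟶ Z} (hsf : P.FactorsThrough (s ≫ f)) : P.FactorsThrough f := by
  obtain ⟨E, a, b, hE, hab⟩ := hsf
  obtain ⟨K, p, h, H, hK⟩ := hs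
  obtain ⟨K', ι, _, H', hK'⟩ := (P.trW_iff' s).1 ⟨K, p, h, H, hK⟩
  have hιs : ι ≫ s = 0 := comp_distTriang_mor_zero₁₂ _ H'
  -- Pushing `E` into the cone `E₂ ∈ P` of `ι ≫ a` makes `a ≫ μ` extend along `s` to some
  -- `ξ : Y ⟶ E₂`; then `f - ξ ≫ b'` vanishes on `s`, so it factors through the cone `K` of `s`.
  obtain ⟨E₂, hE₂, μ, _, Hμ⟩ := P.distinguished_cocone_triangle (ι ≫ a) hK' hE
  have hιab : (ι ≫ a) ≫ b = 0 := by rw [Category.assoc, hab, reassoc_of% hιs, zero_comp]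
  obtain ⟨b', hb'⟩ : ∃ b' : E₂ ⟶ Z, b = μ ≫ b' := Triangle.yoneda_exact₂ _ Hμ b hιab
  have hιaμ : ι ≫ a ≫ μ = 0 := by
    rw [← Category.assoc]; exact comp_distTriang_mor_zero₁₂ _ Hμ
  obtain ⟨ξ, hξ⟩ : ∃ ξ : Y ⟶ E₂, a ≫ μ = s ≫ ξ := Triangle.yoneda_exact₂ _ H' _ hιaμ
  have hsf : s ≫ (f - ξ ≫ b') = 0 := by
    rw [Preadditive.comp_sub, ← reassoc_of% hξ, ← hb', hab, sub_self]
  obtain ⟨δ, hδ⟩ : ∃ δ : K ⟶ Z, f - ξ ≫ b' = p ≫ δ := Triangle.yoneda_exact₂ _ H _ hsf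
  refine ⟨E₂ ⊞ K, biprod.lift ξ p, biprod.desc b' δ,
    P.ext_of_isTriangulatedClosed₂ _ (binaryBiproductTriangle_distinguished E₂ K) hE₂ hK, ?_⟩
  rw [biprod.lift_desc, ← hδ, add_sub_cancel]

lemma FactorsThrough.of_multiplicativeClosure_trW_comp [HasBinaryBiproducts C] {X Y Z : C}
    {s : X ⟶ Y} (hs : P.trW.multiplicativeClosure s) {f : Y ⟶ Z}
    (hsf : P.FactorsThrough (s ≫ f)) : P.FactorsThrough f := by
  induction hs with
  | of s hs => exact hsf.of_trW_comp hs
  | id X => simpa using hsf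
  | comp_of s₁ s₂ _ hs₂ ih => exact (ih (by simpa using hsf)).of_trW_comp hs₂

lemma prop_of_multiplicativeClosure_trW_zero [HasBinaryBiproducts C] [P.IsStableUnderRetracts]
    {X Y : C} (h : P.trW.multiplicativeClosure (0 : X ⟶ Y)) : P Y := by
  obtain ⟨Z, a, b, hZ, hab⟩ : P.FactorsThrough (𝟙 Y) :=
    FactorsThrough.of_multiplicativeClosure_trW_comp h ⟨0, 0, 0, P.prop_zero, by simp⟩
  exact P.prop_of_retract ⟨a, b, hab⟩ hZ

end CategoryTheory.ObjectProperty

namespace CategoryTheory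

open ObjectProperty

section Localization

variable {T : Type u₁} [Category.{v₁} T] [Preadditive T] [HasZeroObject T] [HasShift T ℤ]
  [∀ n : ℤ, (shiftFunctor T n).Additive] [Pretriangulated T]
  {T' : Type u₂} [Category.{v₂} T']

lemma prop_of_isZero_obj (L : T ⥤ T') (P : ObjectProperty T) [P.IsTriangulated]
    [L.IsLocalization P.trW] [HasBinaryBiproducts T] [P.IsClosedUnderIsomorphisms]
    [P.IsStableUnderRetracts] {X : T} (hX : IsZero (L.obj X)) : P X := by
  have := Functor.IsLocalization.multiplicativeClosure L P.trW
  obtain ⟨X', s, hs, fac⟩ := (MorphismProperty.map_eq_iff_precomp L P.trW.multiplicativeClosure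
    (𝟙 X) 0).1 (hX.eq_of_src _ _)
  rw [Category.comp_id, comp_zero] at fac
  subst fac
  exact prop_of_multiplicativeClosure_trW_zero hs

variable [Preadditive T'] [HasZeroObject T'] [HasShift T' ℤ]
  [∀ n : ℤ, (shiftFunctor T' n).Additive] [Pretriangulated T']
  (L : T ⥤ T') [L.CommShift ℤ] [L.IsTriangulated]

lemma Functor.exists_distinguished_lift (W : MorphismProperty T) [L.IsLocalization W]
    [W.HasRightCalculusOfFractions] (Tr : Triangle T') (hTr : Tr ∈ distTriang T')
    {X₁ X₃ : T} (e₁ : Tr.obj₁ ≅ L.obj X₁) (e₃ : Tr.obj₃ ≅ L.obj X₃) :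
    ∃ (X₂ X₃' : T) (a : X₁ ⟶ X₂) (b : X₂ ⟶ X₃') (c : X₃' ⟶ X₁⟦(1 : ℤ)⟧) (s : X₃' ⟶ X₃),
      Triangle.mk a b c ∈ distTriang T ∧ W s ∧ Nonempty (Tr.obj₂ ≅ L.obj X₂) := by
  obtain ⟨φ, hφ⟩ := Localization.exists_rightFraction L W
    (e₃.inv ≫ Tr.mor₃ ≫ e₁.hom⟦(1 : ℤ)⟧' ≫ (L.commShiftIso (1 : ℤ)).inv.app X₁)
  obtain ⟨X₂, a, b, H⟩ := distinguished_cocone_triangle₂ φ.f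
  have comm : (L.map φ.f ≫ (L.commShiftIso (1 : ℤ)).hom.app X₁) ≫ e₁.inv⟦(1 : ℤ)⟧' =
      (L.map φ.s ≫ e₃.inv) ≫ Tr.mor₃ := by
    rw [← φ.map_s_comp_map L (Localization.inverts L W), ← hφ]
    simp [← Functor.map_comp]
  let e := isoTriangleOfIso₁₃ _ _ (L.map_distinguished _ H) hTr e₁.symm
    (Localization.isoOfHom L W φ.s φ.hs ≪≫ e₃.symm) comm
  exact ⟨X₂, φ.X', a, b, φ.f, φ.s, H, φ.hs, ⟨(Triangle.π₂.mapIso e).symm⟩⟩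

variable (P : ObjectProperty T) [P.IsTriangulated] [L.IsLocalization P.trW]

lemma isZero_obj_of_prop {X : T} (hX : P X) : IsZero (L.obj X) := by
  have : IsIso (L.map (0 : X ⟶ 0)) := Localization.inverts L P.trW _
    (trW.mk P (contractible_distinguished₂ X) (P.le_shift 1 X hX))
  exact (L.map_isZero (isZero_zero T)).of_iso (asIso (L.map (0 : X ⟶ 0)))

lemma trW_of_isIso_map [HasBinaryBiproducts T] [P.IsClosedUnderIsomorphisms]
    [P.IsStableUnderRetracts] {X Y : T} {f : X ⟶ Y} (hf : IsIso (L.map f)) : P.trW f := by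
  obtain ⟨Z, g, h, H⟩ := distinguished_cocone_triangle f
  exact ⟨Z, g, h, H, prop_of_isZero_obj L P
    (Triangle.isZero₃_of_isIso₁ _ (L.map_distinguished _ H) hf)⟩

end Localization

end CategoryTheory

section Subcategories

open CategoryTheory ObjectProperty

variable {T : Type u₁} [Category.{v₁} T] {T' : Type u₂} [Category.{v₂} T']

lemma essImageSet_mono (L : T ⥤ T') {U U' : Set T} (h : U ⊆ U') :
    essImageSet L U ⊆ essImageSet L U' := by
  rintro z ⟨u, hu, e⟩
  exact ⟨u, h hu, e⟩

lemma preimageSet_mono (L : T ⥤ T') {X X' : Set T'} (h : X ⊆ X') :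
    preimageSet L X ⊆ preimageSet L X' := by
  rintro t ⟨x, hx, e⟩
  exact ⟨x, h hx, e⟩

lemma subset_preimageSet_essImageSet (L : T ⥤ T') (U : Set T) :
    U ⊆ preimageSet L (essImageSet L U) :=
  fun t ht => ⟨L.obj t, ⟨t, ht, ⟨Iso.refl _⟩⟩, ⟨Iso.refl _⟩⟩

lemma essImageSet_preimageSet (L : T ⥤ T') [L.EssSurj] {X : Set T'}
    (hX : ∀ x y : T', x ∈ X → Nonempty (x ≅ y) → y ∈ X) :
    essImageSet L (preimageSet L X) = X := by
  apply Set.Subset.antisymm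
  · rintro z ⟨t, ⟨x, hx, ⟨e'⟩⟩, ⟨e⟩⟩
    exact hX x z hx ⟨e'.symm ≪≫ e.symm⟩
  · intro x hx
    exact ⟨L.objPreimage x, ⟨x, hx, ⟨L.objObjPreimageIso x⟩⟩, ⟨(L.objObjPreimageIso x).symm⟩⟩

variable [Preadditive T] [HasZeroObject T] [HasShift T ℤ]
  [∀ n : ℤ, (shiftFunctor T n).Additive] [Pretriangulated T]

section Saturation

variable {P : ObjectProperty T} [P.IsStableUnderShift ℤ] {U : Set T}
  (hU : IsExtensionClosed T U) (hPU : ∀ d : T, P d → d ∈ U)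
include hU hPU

lemma mem_iff_of_trW {X Y : T} {s : X ⟶ Y} (hs : P.trW s) : X ∈ U ↔ Y ∈ U := by
  obtain ⟨Z, g, h, H, hZ⟩ := hs
  exact ⟨fun hX => hU _ H hX (hPU Z hZ),
    fun hY => hU _ (inv_rot_of_distTriang _ H) (hPU _ (P.le_shift (-1) Z hZ)) hY⟩

lemma mem_iff_of_multiplicativeClosure_trW {X Y : T} {s : X ⟶ Y}
    (hs : P.trW.multiplicativeClosure s) : X ∈ U ↔ Y ∈ U := by
  induction hs with
  | of s hs => exact mem_iff_of_trW hU hPU hs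
  | id X => exact Iff.rfl
  | comp_of s₁ s₂ _ hs₂ ih => exact ih.trans (mem_iff_of_trW hU hPU hs₂)

end Saturation

variable [Preadditive T'] [HasZeroObject T'] [HasShift T' ℤ]
  [∀ n : ℤ, (shiftFunctor T' n).Additive] [Pretriangulated T']
  (L : T ⥤ T') [L.CommShift ℤ] [L.IsTriangulated]

lemma IsAdditiveSubcategory.preimageSet [HasBinaryBiproducts T] [HasBinaryBiproducts T']
    {X : Set T'} (hX : IsAdditiveSubcategory X) : IsAdditiveSubcategory (preimageSet L X) := by
  have := preservesBinaryBiproducts_of_preservesBiproducts L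
  obtain ⟨hX₀, hXiso, hXsum, hXsummand⟩ := hX
  refine ⟨?_, ?_, ?_, ?_⟩
  · intro t ht
    exact ⟨0, hX₀ 0 (isZero_zero T'), ⟨(L.map_isZero ht).iso (isZero_zero T')⟩⟩
  · rintro t t' ⟨x, hx, ⟨e⟩⟩ ⟨e'⟩
    exact ⟨x, hx, ⟨(L.mapIso e').symm ≪≫ e⟩⟩
  · rintro t t' ⟨x, hx, ⟨e⟩⟩ ⟨y, hy, ⟨e'⟩⟩
    exact ⟨x ⊞ y, hXsum x y hx hy, ⟨L.mapBiprod t t' ≪≫ biprod.mapIso e e'⟩⟩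
  · rintro t t' ⟨x, hx, ⟨e⟩⟩
    obtain ⟨h, h'⟩ := hXsummand (L.obj t) (L.obj t')
      (hXiso x _ hx ⟨e.symm ≪≫ L.mapBiprod t t'⟩)
    exact ⟨⟨L.obj t, h, ⟨Iso.refl _⟩⟩, ⟨L.obj t', h', ⟨Iso.refl _⟩⟩⟩

lemma IsExtensionClosed.preimageSet {X : Set T'}
    (hXiso : ∀ x y : T', x ∈ X → Nonempty (x ≅ y) → y ∈ X) (hX : IsExtensionClosed T' X) :
    IsExtensionClosed T (preimageSet L X) := by
  rintro Tr hTr ⟨x₁, hx₁, ⟨e₁⟩⟩ ⟨x₃, hx₃, ⟨e₃⟩⟩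
  exact ⟨L.obj Tr.obj₂, hX _ (L.map_distinguished _ hTr) (hXiso x₁ _ hx₁ ⟨e₁.symm⟩)
    (hXiso x₃ _ hx₃ ⟨e₃.symm⟩), ⟨Iso.refl _⟩⟩

variable (P : ObjectProperty T) [P.IsTriangulated] [L.IsLocalization P.trW]

lemma prop_subset_preimageSet {X : Set T'} (hX : ∀ x : T', IsZero x → x ∈ X) (d : T)
    (hd : P d) : d ∈ preimageSet L X :=
  ⟨0, hX 0 (isZero_zero T'), ⟨(isZero_obj_of_prop L P hd).iso (isZero_zero T')⟩⟩

variable {P} {U : Set T} (hU : IsExtensionClosed T U) (hPU : ∀ d : T, P d → d ∈ U)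
include hU hPU

lemma IsExtensionClosed.essImageSet : IsExtensionClosed T' (essImageSet L U) := by
  rintro Tr hTr ⟨u₁, hu₁, ⟨e₁⟩⟩ ⟨u₃, hu₃, ⟨e₃⟩⟩
  have := Functor.IsLocalization.multiplicativeClosure L P.trW
  obtain ⟨X₂, X₃, a, b, c, s, H, hs, ⟨e₂⟩⟩ :=
    L.exists_distinguished_lift P.trW.multiplicativeClosure Tr hTr e₁ e₃
  have hX₃ : X₃ ∈ U := (mem_iff_of_multiplicativeClosure_trW hU hPU hs).2 hu₃
  exact ⟨X₂, hU _ H hu₁ hX₃, ⟨e₂⟩⟩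

variable [HasBinaryBiproducts T] [P.IsClosedUnderIsomorphisms] [P.IsStableUnderRetracts]

lemma mem_of_iso_map {X Y : T} (e : L.obj X ≅ L.obj Y) (hY : Y ∈ U) : X ∈ U := by
  have := Functor.IsLocalization.multiplicativeClosure L P.trW
  obtain ⟨φ, hφ⟩ := Localization.exists_rightFraction L P.trW.multiplicativeClosure e.hom
  have hs : IsIso (L.map φ.s) := Localization.inverts L _ _ φ.hs
  have hf : IsIso (L.map φ.f) := by
    rw [← φ.map_s_comp_map L (Localization.inverts L _), ← hφ]
    infer_instance
  exact (mem_iff_of_multiplicativeClosure_trW hU hPU φ.hs).1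
    ((mem_iff_of_trW hU hPU (trW_of_isIso_map L P hf)).2 hY)

lemma preimageSet_essImageSet : preimageSet L (essImageSet L U) = U := by
  refine Set.Subset.antisymm ?_ (subset_preimageSet_essImageSet L U)
  rintro t ⟨x, ⟨u, hu, ⟨e'⟩⟩, ⟨e⟩⟩
  exact mem_of_iso_map L hU hPU (e ≪≫ e') hu

lemma IsAdditiveSubcategory.essImageSet [HasBinaryBiproducts T']
    (hUadd : IsAdditiveSubcategory U) : IsAdditiveSubcategory (essImageSet L U) := by
  have := preservesBinaryBiproducts_of_preservesBiproducts L
  have := Localization.essSurj L P.trW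
  obtain ⟨hU₀, -, hUsum, hUsummand⟩ := hUadd
  refine ⟨?_, ?_, ?_, ?_⟩
  · intro z hz
    exact ⟨0, hU₀ 0 (isZero_zero T), ⟨hz.iso (L.map_isZero (isZero_zero T))⟩⟩
  · rintro z z' ⟨u, hu, ⟨e⟩⟩ ⟨e'⟩
    exact ⟨u, hu, ⟨e'.symm ≪≫ e⟩⟩
  · rintro z z' ⟨u, hu, ⟨e⟩⟩ ⟨u', hu', ⟨e'⟩⟩
    exact ⟨u ⊞ u', hUsum u u' hu hu', ⟨biprod.mapIso e e' ≪≫ (L.mapBiprod u u').symm⟩⟩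
  · rintro z z' ⟨u, hu, ⟨e⟩⟩
    let ez := L.objObjPreimageIso z
    let ez' := L.objObjPreimageIso z'
    obtain ⟨ht, ht'⟩ := hUsummand _ _ (mem_of_iso_map L hU hPU
      (L.mapBiprod _ _ ≪≫ biprod.mapIso ez ez' ≪≫ e) hu)
    exact ⟨⟨_, ht, ⟨ez.symm⟩⟩, ⟨_, ht', ⟨ez'.symm⟩⟩⟩

end Subcategories

theorem verdier_quotient_bijection_extensionClosed_subcategories
    {T : Type u₁} [Category.{v₁} T] [Preadditive T] [HasZeroObject T]
    [HasBinaryBiproducts T] [HasShift T ℤ]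
    [∀ n : ℤ, (shiftFunctor T n).Additive] [Pretriangulated T]
    {T' : Type u₂} [Category.{v₂} T'] [Preadditive T'] [HasZeroObject T']
    [HasBinaryBiproducts T'] [HasShift T' ℤ]
    [∀ n : ℤ, (shiftFunctor T' n).Additive] [Pretriangulated T']
    -- D is a thick subcategory of T
    (D : ObjectProperty T) [D.IsTriangulated] [D.IsClosedUnderIsomorphisms]
    (hD : ∀ X Y : T, D (X ⊞ Y) → D X ∧ D Y)
    -- Q is the Verdier quotient functor T → T/D
    (Q : T ⥤ T') [Q.CommShift ℤ] [Q.IsTriangulated] [Q.IsLocalization D.trW] :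
    -- the two maps are well defined
    (∀ U : Set T, IsAdditiveSubcategory U → IsExtensionClosed T U →
      (∀ d : T, D d → d ∈ U) →
      IsAdditiveSubcategory (essImageSet Q U) ∧ IsExtensionClosed T' (essImageSet Q U)) ∧
    (∀ X : Set T', IsAdditiveSubcategory X → IsExtensionClosed T' X →
      IsAdditiveSubcategory (preimageSet Q X) ∧ IsExtensionClosed T (preimageSet Q X) ∧
        (∀ d : T, D d → d ∈ preimageSet Q X)) ∧
    -- the two maps are mutually inverse
    (∀ U : Set T, IsAdditiveSubcategory U → IsExtensionClosed T U →
      (∀ d : T, D d → d ∈ U) → preimageSet Q (essImageSet Q U) = U) ∧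
    (∀ X : Set T', IsAdditiveSubcategory X → IsExtensionClosed T' X →
      essImageSet Q (preimageSet Q X) = X) ∧
    -- the two maps preserve inclusions
    (∀ U U' : Set T, U ⊆ U' → essImageSet Q U ⊆ essImageSet Q U') ∧
    (∀ X X' : Set T', X ⊆ X' → preimageSet Q X ⊆ preimageSet Q X') := by
  have := D.isStableUnderRetracts_of_biprod hD
  have := Localization.essSurj Q D.trW
  refine ⟨fun U hU hUe hUD => ⟨hU.essImageSet Q hUe hUD, hUe.essImageSet Q hUD⟩,
    fun X hX hXe => ⟨hX.preimageSet Q, hXe.preimageSet Q hX.2.1,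
      prop_subset_preimageSet Q D hX.1⟩,
    fun U _ hUe hUD => preimageSet_essImageSet Q hUe hUD,
    fun X hX _ => essImageSet_preimageSet Q hX.2.1,
    fun U U' => essImageSet_mono Q, fun X X' => preimageSet_mono Q⟩
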